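/- Every quotient morphism q : G → Q between topological groups whose underlying spaces are locally kω is compact-covering: every compact subset of Q is contained in the image of a compact subset of G. -/

import Mathlib

/-- `K` is a kω-sequence for the topological space `X`: an ascending sequence of
compact subsets covering `X` such that the topology of `X` is final with respect
to the inclusions `K n → X`. -/
def IsKOmegaSeq {X : Type*} [TopologicalSpace X] (K : ℕ → Set X) : Prop :=
  (∀ n, IsCompact (K n)) ∧ Monotone K ∧ (⋃ n, K n) = Set.univ ∧
    ∀ U : Set X, IsOpen U ↔ ∀ n, IsOpen ((Subtype.val ⁻¹' U) : Set (K n))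

/-- A kω-space: a Hausdorff space which is the direct limit of an ascending
sequence of compact subsets. -/
def IsKOmega (X : Type*) [TopologicalSpace X] : Prop :=
  T2Space X ∧ ∃ K : ℕ → Set X, IsKOmegaSeq K

/-- A locally kω space: a Hausdorff space each point of which has an open
neighbourhood which is a kω-space in the induced topology. -/
def IsLocallyKOmega (X : Type*) [TopologicalSpace X] : Prop :=
  T2Space X ∧ ∀ x : X, ∃ U : Set X, IsOpen U ∧ x ∈ U ∧ IsKOmega U

/-! A kω neighbourhood `U` of `1` in `G` maps onto an open kω neighbourhood `q '' U` of `1` in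
`Q`, and in a kω space every compact set lies in one of the compact steps, which here are images
of compact sets. A compact subset of `Q` is covered by finitely many translates of `q '' U`, so
it splits into compact pieces which, translated back into `q '' U`, lift. -/

open Pointwise Set

namespace IsKOmegaSeq

variable {X : Type*} [TopologicalSpace X] {K : ℕ → Set X}

theorem isClosed_of_forall_finite_inter [T1Space X] (hK : IsKOmegaSeq K) {S : Set X}
    (hS : ∀ n, (S ∩ K n).Finite) : IsClosed S := by
  rw [← isOpen_compl_iff, hK.2.2.2]
  intro n
  rw [preimage_compl, isOpen_compl_iff, ← Subtype.preimage_coe_inter_self]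
  exact (hS n).isClosed.preimage continuous_subtype_val

/-- If `x n ∈ C \ K n` for all `n`, the tails `x '' Ici m` meet each `K n` in finitely many
points, so they form a decreasing sequence of nonempty closed subsets of `C`; a point `y` in
their intersection lies in some `K k`, yet also equals some `x i` with `i ≥ k`. -/
theorem exists_subset_of_isCompact [T1Space X] (hK : IsKOmegaSeq K) {C : Set X}
    (hC : IsCompact C) : ∃ n, C ⊆ K n := by
  by_contra! h
  choose x hxC hxK using fun n => not_subset.mp (h n)
  have hlt : ∀ i n, x i ∈ K n → i < n := fun i n hi =>
    lt_of_not_ge fun hni => hxK i (hK.2.1 hni hi)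
  have hclosed : ∀ m, IsClosed (x '' Ici m) := fun m =>
    hK.isClosed_of_forall_finite_inter fun n =>
      ((finite_Iio n).image x).subset fun _ ⟨⟨i, _, hi⟩, hin⟩ => ⟨i, hlt i n (hi ▸ hin), hi⟩
  have hcompact : IsCompact (x '' Ici 0) :=
    hC.of_isClosed_subset (hclosed 0) (image_subset_iff.2 fun i _ => hxC i)
  obtain ⟨y, hy⟩ := hcompact.nonempty_iInter_of_sequence_nonempty_isCompact_isClosed _
    (fun m => image_mono (Ici_subset_Ici.2 m.le_succ))
    (fun m => ⟨x m, mem_image_of_mem x self_mem_Ici⟩) hclosed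
  obtain ⟨k, hk⟩ := mem_iUnion.1 (hK.2.2.1 ▸ mem_univ y)
  obtain ⟨i, hik, rfl⟩ := mem_iInter.1 hy k
  exact absurd (hlt i k hk) (not_lt.2 hik)

theorem image {Y : Type*} [TopologicalSpace Y] (hK : IsKOmegaSeq K) {f : X → Y}
    (hc : Continuous f) (hs : Function.Surjective f) (ho : IsOpenMap f) :
    IsKOmegaSeq (fun n => f '' K n) := by
  obtain ⟨hKc, hKm, hKu, hKt⟩ := hK
  refine ⟨fun n => (hKc n).image hc, fun _ _ hmn => image_mono (hKm hmn), ?_, fun U => ⟨?_, ?_⟩⟩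
  · rw [← image_iUnion, hKu, image_univ, hs.range_eq]
  · exact fun hU n => hU.preimage continuous_subtype_val
  · intro hU
    have hfK : ∀ n, Continuous fun k : K n => (⟨f k, mem_image_of_mem f k.2⟩ : f '' K n) :=
      fun n => (hc.comp continuous_subtype_val).subtype_mk _
    rw [← hs.image_preimage U]
    exact ho _ ((hKt _).2 fun n => (hU n).preimage (hfK n))

end IsKOmegaSeq

theorem IsOpenMap.exists_isCompact_image_superset {X Y : Type*} [TopologicalSpace X]
    [TopologicalSpace Y] [T1Space Y] {f : X → Y} (ho : IsOpenMap f) (hc : Continuous f)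
    {U : Set X} (hU : IsOpen U) {A : ℕ → Set U} (hA : IsKOmegaSeq A) {C : Set Y}
    (hC : IsCompact C) (hCU : C ⊆ f '' U) : ∃ L : Set X, IsCompact L ∧ C ⊆ f '' L := by
  have hB : IsKOmegaSeq fun n => U.imageFactorization f '' A n :=
    hA.image ((hc.comp continuous_subtype_val).subtype_mk _) imageFactorization_surjective
      ((ho.domRestrict hU).subtype_mk _)
  have hC' : IsCompact (Subtype.val ⁻¹' C : Set (f '' U)) := by
    rwa [Subtype.isCompact_iff, image_preimage_eq_of_subset (by rwa [Subtype.range_coe])]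
  obtain ⟨n, hn⟩ := hB.exists_subset_of_isCompact hC'
  refine ⟨Subtype.val '' A n, (hA.1 n).image continuous_subtype_val, fun z hz => ?_⟩
  obtain ⟨u, hu, huz⟩ := hn (show ⟨z, hCU hz⟩ ∈ Subtype.val ⁻¹' C from hz)
  exact ⟨u, mem_image_of_mem _ hu, congrArg Subtype.val huz⟩

theorem MonoidHom.exists_isCompact_image_superset {G Q : Type*} [Group G] [TopologicalSpace G]
    [IsTopologicalGroup G] [Group Q] [TopologicalSpace Q] [IsTopologicalGroup Q]
    (q : G →* Q) (hq : Function.Surjective q) {V : Set Q} (hV : IsOpen V) (hV1 : 1 ∈ V)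
    (hlift : ∀ C ⊆ V, IsCompact C → ∃ L : Set G, IsCompact L ∧ C ⊆ q '' L)
    {K : Set Q} (hK : IsCompact K) : ∃ L : Set G, IsCompact L ∧ K ⊆ q '' L := by
  have hcover : K ⊆ ⋃ g : G, q g • V := fun z _ =>
    let ⟨g, hg⟩ := hq z
    mem_iUnion.2 ⟨g, by simpa [hg] using smul_mem_smul_set (a := z) hV1⟩
  obtain ⟨t, ht⟩ := hK.elim_finite_subcover _ (fun g => hV.smul (q g)) hcover
  obtain ⟨C, hCc, hCV, rfl⟩ := hK.finite_compact_cover t _ (fun g _ => hV.smul (q g)) ht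
  have hpiece : ∀ g, ∃ L : Set G, IsCompact L ∧ C g ⊆ q '' (g • L) := fun g => by
    obtain ⟨L, hL, hCL⟩ :=
      hlift _ (subset_smul_set_iff.1 (hCV g)) ((hCc g).smul (q g)⁻¹)
    exact ⟨L, hL, by rwa [image_smul_distrib, subset_smul_set_iff]⟩
  choose L hL hCL using hpiece
  refine ⟨⋃ g ∈ t, g • L g, t.finite_toSet.isCompact_biUnion fun g _ => (hL g).smul g, ?_⟩
  rw [image_iUnion₂]
  exact iUnion₂_mono fun g _ => hCL g

/-- Every quotient morphism (surjective, open, continuous homomorphism) between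
topological groups whose underlying spaces are locally kω is compact-covering. -/
theorem quotientMorphism_compactCovering
    {G Q : Type*} [Group G] [TopologicalSpace G] [IsTopologicalGroup G]
    [Group Q] [TopologicalSpace Q] [IsTopologicalGroup Q]
    (hG : IsLocallyKOmega G) (hQ : IsLocallyKOmega Q)
    (q : G →* Q) (hq_cont : Continuous q) (hq_surj : Function.Surjective q)
    (hq_open : IsOpenMap q) :
    ∀ K : Set Q, IsCompact K → ∃ L : Set G, IsCompact L ∧ K ⊆ q '' L := by
  have : T2Space Q := hQ.1
  obtain ⟨U, hU, hU1, -, A, hA⟩ := hG.2 1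
  exact fun K hK => q.exists_isCompact_image_superset hq_surj (hq_open U hU)
    ⟨1, hU1, map_one q⟩
    (fun C hCV hC => hq_open.exists_isCompact_image_superset hq_cont hU hA hC hCV) hK
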